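/- Local analytic splitting for Banach-space representations: let G be a compact topological group, E a complex Banach space, and ρ a norm-continuous representation of G on E. Then there exist ε > 0 and a map V defined on the set S of all norm-continuous representations ρ' of G on E with sup_{g ∈ G} ‖ρ'(g) − ρ(g)‖ < ε (viewed as a subset of the Banach space C(G, L(E))), taking values in the bounded operators on E, such that: V(ρ) = 1; each V(ρ') is invertible; V(ρ') ρ'(g) V(ρ')⁻¹ = ρ(g) for all g ∈ G and ρ' ∈ S; and V is analytic on S as a map between subsets of the real Banach spaces C(G, L(E)) and L(E). -/

import Mathlib

/-!
Average over the Haar probability measure: `V f = ∫ ρ g * f g⁻¹ dg` is real-linear and bounded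
in `f`, hence analytic, and `V ρ = 1`, so `V f` is invertible for `f` near `ρ`. When `f` is
multiplicative, substituting `g ↦ h g` in the integral for `V f * f h` gives
`V f * f h = ρ h * V f`.
-/

/-- A continuous map `f : C(G, E →L[ℂ] E)` "is a norm-continuous representation of `G`
on the Banach space `E`": it is valued in invertible operators, unital and
multiplicative. -/
def IsBanachRep {G : Type*} [Group G] [TopologicalSpace G]
    {E : Type*} [NormedAddCommGroup E] [NormedSpace ℂ E]
    (f : C(G, E →L[ℂ] E)) : Prop :=
  (∀ g : G, IsUnit (f g)) ∧ f 1 = 1 ∧ ∀ g h : G, f (g * h) = f g * f h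

open MeasureTheory

namespace MeasureTheory.Measure

theorem isProbabilityMeasure_haarMeasure_top {G : Type*} [Group G] [TopologicalSpace G]
    [IsTopologicalGroup G] [CompactSpace G] [MeasurableSpace G] [BorelSpace G] :
    IsProbabilityMeasure (haarMeasure (⊤ : TopologicalSpace.PositiveCompacts G)) :=
  ⟨haarMeasure_self⟩

end MeasureTheory.Measure

theorem Continuous.integrable_of_compactSpace {X E : Type*} [TopologicalSpace X] [CompactSpace X]
    [MeasurableSpace X] [OpensMeasurableSpace X] [NormedAddCommGroup E] {μ : Measure X}
    [IsFiniteMeasure μ] {f : X → E} (hf : Continuous f) : Integrable f μ :=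
  hf.integrable_of_hasCompactSupport (.of_compactSpace f)

section TwistedAverage

variable {G : Type*} [Group G] [TopologicalSpace G] [IsTopologicalGroup G] [CompactSpace G]
  [MeasurableSpace G] [BorelSpace G] {A : Type*} [NormedRing A]
  (μ : Measure G) [IsProbabilityMeasure μ] (ρ : C(G, A))

theorem integrable_mul_apply_inv (f : C(G, A)) : Integrable (fun g ↦ ρ g * f g⁻¹) μ :=
  (ρ.continuous.mul (f.continuous.comp continuous_inv)).integrable_of_compactSpace

variable [NormedAlgebra ℝ A]

noncomputable def twistedAverage : C(G, A) →L[ℝ] A :=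
  LinearMap.mkContinuous
    { toFun := fun f ↦ ∫ g, ρ g * f g⁻¹ ∂μ
      map_add' := fun f f' ↦ by
        simp only [ContinuousMap.add_apply, mul_add]
        exact integral_add (integrable_mul_apply_inv μ ρ f) (integrable_mul_apply_inv μ ρ f')
      map_smul' := fun c f ↦ by
        simp only [ContinuousMap.smul_apply, mul_smul_comm, RingHom.id_apply]
        exact integral_smul c _ }
    ‖ρ‖ fun f ↦ by
      simpa using norm_integral_le_of_norm_le_const (μ := μ) <| ae_of_all _ fun g ↦
        (norm_mul_le _ _).trans <| mul_le_mul (ρ.norm_coe_le_norm g) (f.norm_coe_le_norm g⁻¹)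
          (norm_nonneg _) (norm_nonneg ρ)

theorem twistedAverage_apply (f : C(G, A)) : twistedAverage μ ρ f = ∫ g, ρ g * f g⁻¹ ∂μ := rfl

theorem norm_twistedAverage_le : ‖twistedAverage μ ρ‖ ≤ ‖ρ‖ :=
  LinearMap.mkContinuous_norm_le _ (norm_nonneg _) _

variable {ρ} [CompleteSpace A]

theorem twistedAverage_self (h_one : ρ 1 = 1) (h_mul : ∀ g h, ρ (g * h) = ρ g * ρ h) :
    twistedAverage μ ρ ρ = 1 := by
  have : (fun g ↦ ρ g * ρ g⁻¹) = fun _ ↦ 1 := funext fun g ↦ by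
    rw [← h_mul, mul_inv_cancel, h_one]
  simp [twistedAverage_apply, this]

theorem twistedAverage_mul_apply [μ.IsMulLeftInvariant] (h_mul : ∀ g h, ρ (g * h) = ρ g * ρ h)
    {f : C(G, A)} (hf_mul : ∀ g h, f (g * h) = f g * f h) (h : G) :
    twistedAverage μ ρ f * f h = ρ h * twistedAverage μ ρ f := by
  have hint := integrable_mul_apply_inv μ ρ f
  calc twistedAverage μ ρ f * f h = ∫ g, ρ g * f g⁻¹ * f h ∂μ :=
        (((ContinuousLinearMap.mul ℝ A).flip (f h)).integral_comp_comm hint).symm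
    _ = ∫ g, ρ g * f (g⁻¹ * h) ∂μ := by simp_rw [mul_assoc, hf_mul]
    _ = ∫ g, ρ (h * g) * f ((h * g)⁻¹ * h) ∂μ :=
        (integral_mul_left_eq_self (fun g ↦ ρ g * f (g⁻¹ * h)) h).symm
    _ = ∫ g, ρ h * (ρ g * f g⁻¹) ∂μ := by simp [h_mul, mul_assoc]
    _ = ρ h * twistedAverage μ ρ f :=
        (ContinuousLinearMap.mul ℝ A (ρ h)).integral_comp_comm hint

theorem isUnit_twistedAverage (h_one : ρ 1 = 1) (h_mul : ∀ g h, ρ (g * h) = ρ g * ρ h)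
    {f : C(G, A)} (hf : ‖f - ρ‖ < (‖ρ‖ + 1)⁻¹) : IsUnit (twistedAverage μ ρ f) := by
  have hsmall : ‖1 - twistedAverage μ ρ f‖ < 1 := calc
    ‖1 - twistedAverage μ ρ f‖ = ‖twistedAverage μ ρ (f - ρ)‖ := by
      rw [map_sub, twistedAverage_self μ h_one h_mul, norm_sub_rev]
    _ ≤ ‖ρ‖ * ‖f - ρ‖ := (twistedAverage μ ρ).le_of_opNorm_le (norm_twistedAverage_le μ ρ) _
    _ ≤ ‖ρ‖ * (‖ρ‖ + 1)⁻¹ := by gcongr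
    _ < 1 := by rw [← div_eq_mul_inv, div_lt_one (by positivity)]; linarith
  simpa using isUnit_one_sub_of_norm_lt_one hsmall

end TwistedAverage

theorem local_analytic_splitting_rep_banach
    {G : Type*} [Group G] [TopologicalSpace G] [IsTopologicalGroup G] [CompactSpace G]
    {E : Type*} [NormedAddCommGroup E] [NormedSpace ℂ E] [CompleteSpace E]
    (ρ : C(G, E →L[ℂ] E)) (hρ : IsBanachRep ρ) :
    ∃ ε > (0 : ℝ), ∃ V : C(G, E →L[ℂ] E) → (E →L[ℂ] E),
      V ρ = 1 ∧
      (∀ ρ' ∈ {f : C(G, E →L[ℂ] E) | IsBanachRep f ∧ (⨆ g : G, ‖f g - ρ g‖) < ε},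
        ∃ W : E →L[ℂ] E, V ρ' * W = 1 ∧ W * V ρ' = 1 ∧
          ∀ g : G, V ρ' * ρ' g * W = ρ g) ∧
      AnalyticOn ℝ V
        {f : C(G, E →L[ℂ] E) | IsBanachRep f ∧ (⨆ g : G, ‖f g - ρ g‖) < ε} := by
  borelize G
  have := Measure.isProbabilityMeasure_haarMeasure_top (G := G)
  set μ := Measure.haarMeasure (⊤ : TopologicalSpace.PositiveCompacts G)
  obtain ⟨-, h_one, h_mul⟩ := hρ
  refine ⟨(‖ρ‖ + 1)⁻¹, by positivity, twistedAverage μ ρ, twistedAverage_self μ h_one h_mul,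
    ?_, (twistedAverage μ ρ).analyticOn _⟩
  rintro ρ' ⟨⟨-, -, hρ'_mul⟩, hclose⟩
  have hclose : ‖ρ' - ρ‖ < (‖ρ‖ + 1)⁻¹ := by simpa [ContinuousMap.norm_eq_iSup_norm] using hclose
  obtain ⟨u, hu⟩ := isUnit_twistedAverage μ h_one h_mul hclose
  refine ⟨↑u⁻¹, hu ▸ u.mul_inv, hu ▸ u.inv_mul, fun g ↦ ?_⟩
  rw [twistedAverage_mul_apply μ h_mul hρ'_mul, mul_assoc, ← hu, u.mul_inv, mul_one]
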